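/- Let n₀ = (#A)² − 2(#A) + 2. For every integer n ≥ 2n₀, max_{a,b,c ∈ A} | |σⁿ(a)|_c/|σⁿ(a)| − |σⁿ(b)|_c/|σⁿ(b)| | ≤ 2·exp( max_{b∈A} d(e_b M_σ^{n₀}, α) )^{ τ_B(M_σ^{n₀})^{⌊n/n₀⌋ − 1} } − 2. -/

import Mathlib

/-!
Two classical facts combine. First, Wielandt's bound: if some power of a relation on `n ≥ 2`
points is total, then so is every power of exponent at least `n² - 2n + 2`. A shortest cycle has
length `s ≤ n - 1`; every point reaches it in exactly `n - s` steps, and a point of the cycle,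
carrying a loop for the `s`-th power, reaches everything in `n - 1` steps of that power. Both
counts hold because a monotone chain of subsets of an `n`-element set grows strictly until it
stabilises. Applied to `b ∈ σ a`, this makes `P = M_σ^{n₀}` positive.

Second, Birkhoff's contraction: `P` contracts Hilbert's projective metric by `τ_B(P)` and fixes
the ray of `α`, while any nonzero nonnegative `v` has `vP` within `max_b d(e_b P, α)` of `α`
(all of `vP` lies between the extreme row ratios). So the letter-count vector `e_a M_σ^n` is
within `τ^{⌊n/n₀⌋-1} · max_b d(e_b P, α)` of `α`, and a positive vector at projective distance
`d` from `α` has normalised coordinates within `e^d - 1` of those of `α`.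
-/

open List Filter

section Defs

variable {A : Type*}

/-- The segment `u_[i,j)` of the sequence `u`. -/
def seg (u : ℕ → A) (i j : ℕ) : List A :=
  (List.range (j - i)).map fun k => u (i + k)

/-- A substitution applied to a word, letter by letter. -/
def substWord (σ : A → List A) (w : List A) : List A := w.flatMap σ

/-- `σ^p` applied to a word. -/
def substPow (σ : A → List A) (p : ℕ) (w : List A) : List A := (substWord σ)^[p] w

/-- A substitution is primitive if some power of it sends every letter to a word
containing every letter. -/
def IsPrimitiveSubst (σ : A → List A) : Prop :=
  ∃ k : ℕ, ∀ a b : A, a ∈ substPow σ k [b]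

/-- `u` is a fixed point of `σ`: the image of every prefix of `u` is again a prefix of `u`. -/
def IsFixedPoint (σ : A → List A) (u : ℕ → A) : Prop :=
  ∀ m : ℕ, substWord σ (seg u 0 m) = seg u 0 (substWord σ (seg u 0 m)).length

/-- `u` is aperiodic under the left shift: `T^i u ≠ u` for all `i ≥ 1`. -/
def AperiodicSeq (u : ℕ → A) : Prop := ∀ i : ℕ, 1 ≤ i → (fun n => u (n + i)) ≠ u

/-- The set `E_p` of natural `p`-cutting points. -/
def cutPoints (σ : A → List A) (u : ℕ → A) (p : ℕ) : Set ℕ :=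
  { m | ∃ n : ℕ, m = (substPow σ p (seg u 0 n)).length }

/-- Unilateral recognizability of `σ` (with fixed point `u`). -/
def UnilaterallyRecognizable (σ : A → List A) (u : ℕ → A) : Prop :=
  ∃ L : ℕ, 1 ≤ L ∧ ∀ i j : ℕ,
    seg u i (i + L) = seg u j (j + L) → i ∈ cutPoints σ u 1 → j ∈ cutPoints σ u 1

/-- `L_n(u)`: the set of factors of `u` of length `n`. -/
def factors (u : ℕ → A) (n : ℕ) : Set (List A) := { w | ∃ i : ℕ, w = seg u i (i + n) }

/-- `L(u)`: the language of `u` (including the empty word). -/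
def lang (u : ℕ → A) : Set (List A) := { w | ∃ i n : ℕ, w = seg u i (i + n) }

/-- `w^n`: the concatenation of `n` copies of `w`. -/
def wpow (w : List A) (n : ℕ) : List A := (List.replicate n w).flatten

/-- A nonempty word `v` is primitive if `v = w^n` with `w` nonempty forces `w = v`. -/
def PrimitiveWord (v : List A) : Prop :=
  ∀ w : List A, w ≠ [] → ∀ n : ℕ, 1 ≤ n → v = wpow w n → w = v

/-- `g` is a gap of occurrences of `w` in `u` if every interval of length `g` in `ℤ₊`
contains an occurrence of `w`. -/
def IsGap (u : ℕ → A) (w : List A) (g : ℕ) : Prop := ∀ i : ℕ, w <:+: seg u i (i + g)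

/-- The minimal gap of a word. -/
noncomputable def minGap (u : ℕ → A) (w : List A) : ℕ := sInf { g | IsGap u w g }

/-- `g`: the maximum over `w ∈ L₂(u)` of the minimal gap of `w`. -/
noncomputable def gapConst (u : ℕ → A) : ℕ :=
  sSup { m | ∃ w ∈ factors u 2, m = minGap u w }

/-- A natural `p`-cutting `{α, σ^p(u_{i'}), …, σ^p(u_{i'+k-1}), β}` of `u_[i,i+ℓ)`. -/
def IsNaturalCutting (σ : A → List A) (u : ℕ → A) (p i ℓ : ℕ)
    (α : List A) (i' k : ℕ) (β : List A) : Prop :=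
  1 ≤ k ∧
  α <:+ substPow σ p [u (i' - 1)] ∧
  β <+: substPow σ p [u (i' + k)] ∧
  seg u i (i + ℓ) = α ++ substPow σ p (seg u i' (i' + k)) ++ β ∧
  i + α.length = (substPow σ p (seg u 0 i')).length

section Fin

variable [Fintype A] [Nonempty A] [DecidableEq A]

/-- The incidence matrix of a substitution: the `(a,b)` entry is `|σ(a)|_b`. -/
def incMatrix (σ : A → List A) : Matrix A A ℕ := Matrix.of fun a b => (σ a).count b

/-- The incidence matrix as a real matrix. -/
noncomputable def incMatrixR (σ : A → List A) : Matrix A A ℝ :=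
  Matrix.of fun a b => ((σ a).count b : ℝ)

/-- `S_p = max_{a ∈ A} |σ^p(a)|`. -/
def Sp (σ : A → List A) (p : ℕ) : ℕ :=
  Finset.univ.sup' Finset.univ_nonempty fun a => (substPow σ p [a]).length

/-- `I_p = min_{a ∈ A} |σ^p(a)|`. -/
def Ip (σ : A → List A) (p : ℕ) : ℕ :=
  Finset.univ.inf' Finset.univ_nonempty fun a => (substPow σ p [a]).length

/-- `C = ⌈(max_b β_b)/(min_b β_b)⌉` for a positive eigenvector `β`. -/
noncomputable def Cst (β : A → ℝ) : ℕ :=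
  ⌈(Finset.univ.sup' Finset.univ_nonempty β) / (Finset.univ.inf' Finset.univ_nonempty β)⌉₊

/-- `K = ⌈λ C² max{2(g+1), (#A)²}⌉`. -/
noncomputable def Kst (u : ℕ → A) (lam : ℝ) (β : A → ℝ) : ℕ :=
  ⌈lam * (Cst β : ℝ) ^ 2 *
    max (2 * ((gapConst u : ℝ) + 1)) ((Fintype.card A : ℝ) ^ 2)⌉₊

/-- The constant `p₀` of Lemma 4.2. -/
noncomputable def p0 (u : ℕ → A) (lam : ℝ) (β : A → ℝ) : ℕ :=
  (Kst u lam β) ^ 2 * ((Cst β) ^ 4 * (Kst u lam β + 1) + 2 * (Cst β) ^ 2 + 1) *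
    (∑ n ∈ Finset.Icc ((Cst β) ^ 2 * (Kst u lam β + 1) + 2)
        ((Kst u lam β + 1) * (Cst β) ^ 6 + 2 * (Cst β) ^ 4 + (Cst β) ^ 2 + 2), n) + 1

/-- The constant `L₀ = (C⁴(K+1)+2C²+1) S_{p₀}`. -/
noncomputable def L0 (σ : A → List A) (u : ℕ → A) (lam : ℝ) (β : A → ℝ) : ℕ :=
  ((Cst β) ^ 4 * (Kst u lam β + 1) + 2 * (Cst β) ^ 2 + 1) * Sp σ (p0 u lam β)

/-- The ℓ¹ norm of a vector. -/
def l1norm (f : A → ℝ) : ℝ := ∑ a, |f a|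

/-- The projective metric on positive row vectors. -/
noncomputable def projMetric (x y : A → ℝ) : ℝ :=
  Real.log ((Finset.univ.sup' Finset.univ_nonempty fun a => x a / y a) /
    (Finset.univ.inf' Finset.univ_nonempty fun a => x a / y a))

/-- The Birkhoff contraction coefficient of a matrix. -/
noncomputable def birkhoff (M : Matrix A A ℝ) : ℝ :=
  sSup { r | ∃ x y : A → ℝ, (∀ a, 0 < x a) ∧ (∀ a, 0 < y a) ∧
    LinearIndependent ℝ ![x, y] ∧
    r = projMetric (Matrix.vecMul x M) (Matrix.vecMul y M) / projMetric x y }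

end Fin

/-- Membership in the vertex set `V^*`: pairs `(xac, ybc)` of factors of `u` of length
`N + L₁ + 1` with `a ≠ b` and `|c| = L₁`. -/
def memVstar (u : ℕ → A) (N L₁ : ℕ) (p : List A × List A) : Prop :=
  ∃ (x y c : List A) (a b : A), a ≠ b ∧
    x.length = N ∧ y.length = N ∧ c.length = L₁ ∧
    p.1 = x ++ a :: c ∧ p.2 = y ++ b :: c ∧
    p.1 ∈ factors u (N + L₁ + 1) ∧ p.2 ∈ factors u (N + L₁ + 1)

/-- An edge between representatives: there is a word `w` with `s'w` a suffix of `σ(s)` and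
`t'w` a suffix of `σ(t)`. -/
def edgeRep (σ : A → List A) (p q : List A × List A) : Prop :=
  ∃ w : List A, w ≠ [] ∧ (q.1 ++ w) <:+ substWord σ p.1 ∧ (q.2 ++ w) <:+ substWord σ p.2

/-- An edge in the graph `G` between the unordered pairs represented by `p` and `q`. -/
def graphEdge (σ : A → List A) (p q : List A × List A) : Prop :=
  edgeRep σ p q ∨ edgeRep σ p q.swap ∨ edgeRep σ p.swap q ∨ edgeRep σ p.swap q.swap

/-- A representative generates a gap of natural 1-cutting points. -/
def genGapRep (σ : A → List A) (p : List A × List A) : Prop :=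
  ∃ (α β : A) (γ δ : List A),
    (σ α <:+ σ β ∧ σ α ≠ σ β) ∧
    List.Forall₂ (fun s t => σ s = σ t) γ δ ∧
    (α :: γ) <:+ substWord σ p.1 ∧ (β :: δ) <:+ substWord σ p.2

/-- The unordered pair represented by `p` generates a gap of natural 1-cutting points. -/
def genGap (σ : A → List A) (p : List A × List A) : Prop :=
  genGapRep σ p ∨ genGapRep σ p.swap

/-- The list of consecutive two-letter blocks of a word. -/
def pairsList (l : List A) : List (List A) :=
  List.zipWith (fun a b => [a, b]) l l.tail

end Defs

section RelPow

variable {A : Type*} (E : A → A → Prop)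

def RelPow : ℕ → A → A → Prop
  | 0 => Eq
  | t + 1 => Relation.Comp E (RelPow t)

variable {E}

theorem relPow_zero {a b : A} : RelPow E 0 a b ↔ a = b := Iff.rfl

theorem relPow_succ {t : ℕ} {a b : A} : RelPow E (t + 1) a b ↔ ∃ c, E a c ∧ RelPow E t c b :=
  Iff.rfl

theorem relPow_add {s t : ℕ} {a b : A} :
    RelPow E (s + t) a b ↔ ∃ c, RelPow E s a c ∧ RelPow E t c b := by
  induction s generalizing a with
  | zero => simp [relPow_zero]
  | succ s ih =>
    rw [Nat.add_right_comm]
    simp only [relPow_succ, ih]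
    exact ⟨fun ⟨c, hac, d, hcd, hdb⟩ => ⟨d, ⟨c, hac, hcd⟩, hdb⟩,
      fun ⟨d, ⟨c, hac, hcd⟩, hdb⟩ => ⟨c, hac, d, hcd, hdb⟩⟩

theorem relPow_of_chain {g : ℕ → A} (hg : ∀ i, E (g i) (g (i + 1))) (i t : ℕ) :
    RelPow E t (g i) (g (i + t)) := by
  induction t generalizing i with
  | zero => rfl
  | succ t ih =>
    exact ⟨g (i + 1), hg i, by simpa only [Nat.add_right_comm, Nat.add_assoc] using ih (i + 1)⟩

theorem exists_chain_of_relPow {t : ℕ} {a b : A} (h : RelPow E t a b) :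
    ∃ f : ℕ → A, f 0 = a ∧ f t = b ∧ ∀ i < t, E (f i) (f (i + 1)) := by
  induction t generalizing a with
  | zero => exact ⟨fun _ => a, rfl, h, fun i hi => absurd hi (Nat.not_lt_zero i)⟩
  | succ t ih =>
    obtain ⟨c, hac, hcb⟩ := h
    obtain ⟨f, hf0, hft, hf⟩ := ih hcb
    refine ⟨fun i => Nat.casesOn i a f, rfl, hft, fun i hi => ?_⟩
    cases i with
    | zero => simpa [hf0] using hac
    | succ i => exact hf i (by omega)

theorem exists_periodic_chain {s : ℕ} (hs : 0 < s) {a : A} (h : RelPow E s a a) :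
    ∃ g : ℕ → A, (∀ i, E (g i) (g (i + 1))) ∧ Function.Periodic g s := by
  obtain ⟨f, hf0, hfs, hf⟩ := exists_chain_of_relPow h
  refine ⟨fun i => f (i % s), fun i => ?_, fun i => by simp⟩
  have hwrap : f ((i + 1) % s) = f (i % s + 1) := by
    rw [← Nat.mod_add_mod]
    rcases Nat.lt_or_eq_of_le (Nat.mod_lt i hs) with hlt | heq
    · rw [Nat.mod_eq_of_lt hlt]
    · rw [← Nat.succ_eq_add_one, heq, Nat.mod_self, hf0, hfs]
  simpa only [hwrap] using hf (i % s) (Nat.mod_lt i hs)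

theorem RelPow.eq_of_functional (hE : ∀ a b b', E a b → E a b' → b = b') {t : ℕ} {a b b' : A}
    (h : RelPow E t a b) (h' : RelPow E t a b') : b = b' := by
  induction t generalizing a with
  | zero => exact h.symm.trans h'
  | succ t ih =>
    obtain ⟨c, hac, hcb⟩ := h
    obtain ⟨c', hac', hcb'⟩ := h'
    exact ih hcb (hE a c c' hac hac' ▸ hcb')

theorem relPow_of_le {k m : ℕ} (hk : 0 < k) (hkm : k ≤ m) (h : ∀ a b, RelPow E k a b) :
    ∀ a b, RelPow E m a b := by
  induction m, hkm using Nat.le_induction with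
  | base => exact h
  | succ m hkm ih =>
    intro a b
    obtain ⟨k, rfl⟩ := Nat.exists_eq_add_of_lt hk
    obtain ⟨c, hac, -⟩ := relPow_succ.1 (by simpa using h a a)
    exact ⟨c, hac, ih c b⟩

end RelPow

section MonotoneChain

variable {A : Type*} [Fintype A]

theorem Finset.iterate_card_sub_eq_univ {f : Finset A → Finset A} (hf : Monotone f)
    {s : Finset A} (hs : s ⊆ f s) {k : ℕ} (hk : f^[k] s = .univ) :
    f^[Fintype.card A - s.card] s = .univ := by
  have hmono : ∀ {i j : ℕ}, i ≤ j → f^[i] s ⊆ f^[j] s := by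
    refine fun {i j} hij => monotone_nat_of_le_succ (f := fun j => f^[j] s) (fun j => ?_) hij
    induction j with
    | zero => exact hs
    | succ j ih =>
      rw [Function.iterate_succ_apply', Function.iterate_succ_apply' f (j + 1)]
      exact hf ih
  have hstable {j : ℕ} (hj : f^[j + 1] s = f^[j] s) : ∀ i, f^[j + i] s = f^[j] s := by
    intro i
    induction i with
    | zero => rfl
    | succ i ih => rw [← Nat.add_assoc, Function.iterate_succ_apply', ih,
        ← Function.iterate_succ_apply' f j, hj]
  have hgrow : ∀ j, f^[j] s = .univ ∨ s.card + j ≤ (f^[j] s).card := by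
    intro j
    induction j with
    | zero => exact .inr le_rfl
    | succ j ih =>
      by_cases hj : f^[j + 1] s = f^[j] s
      · left
        refine Finset.eq_univ_of_forall fun a => hmono (Nat.le_add_right j 1) ?_
        rcases le_total k j with hkj | hjk
        · exact hmono hkj (hk ▸ Finset.mem_univ a)
        · rw [← hstable hj (k - j), Nat.add_sub_cancel' hjk, hk]
          exact Finset.mem_univ a
      · rcases ih with ih | ih
        · exact .inl (Finset.eq_univ_of_forall fun a =>
            hmono (Nat.le_add_right j 1) (ih ▸ Finset.mem_univ a))
        · right
          have := Finset.card_lt_card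
            (Finset.ssubset_iff_subset_ne.2 ⟨hmono (Nat.le_add_right j 1), Ne.symm hj⟩)
          omega
  rcases hgrow (Fintype.card A - s.card) with h | h
  · exact h
  · exact Finset.eq_univ_of_card _ (le_antisymm (Finset.card_le_univ _) (by
      have := Finset.card_le_univ s; omega))

end MonotoneChain

section ShortestCycle

variable {A : Type*} {E : A → A → Prop}

structure IsShortestCycle (E : A → A → Prop) (g : ℕ → A) (s : ℕ) : Prop where
  pos : 0 < s
  chain : ∀ i, E (g i) (g (i + 1))
  periodic : Function.Periodic g s
  minimal : ∀ t a, 0 < t → RelPow E t a a → s ≤ t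

theorem exists_isShortestCycle [Nonempty A] {k : ℕ} (hk : 0 < k) (hE : ∀ a b, RelPow E k a b) :
    ∃ g s, IsShortestCycle E g s := by
  classical
  have hex : ∃ s, 0 < s ∧ ∃ a, RelPow E s a a :=
    ⟨k, hk, Classical.arbitrary A, hE _ _⟩
  obtain ⟨hs, b, hb⟩ := Nat.find_spec hex
  obtain ⟨g, hchain, hper⟩ := exists_periodic_chain hs hb
  exact ⟨g, Nat.find hex, hs, hchain, hper, fun t a ht hta => Nat.find_min' hex ⟨ht, a, hta⟩⟩

namespace IsShortestCycle

variable {g : ℕ → A} {s : ℕ}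

theorem relPow (hc : IsShortestCycle E g s) (i t : ℕ) : RelPow E t (g i) (g (i + t)) :=
  relPow_of_chain hc.chain i t

theorem injOn (hc : IsShortestCycle E g s) : Set.InjOn g (Set.Iio s) := by
  intro i hi j hj hij
  by_contra hne
  wlog hlt : i < j generalizing i j
  · exact this hj hi hij.symm (Ne.symm hne) (by omega)
  have hloop := hc.relPow i (j - i)
  rw [Nat.add_sub_cancel' hlt.le, ← hij] at hloop
  have := hc.minimal _ _ (by omega) hloop
  simp only [Set.mem_Iio] at hi hj
  omega

theorem card_image_range [DecidableEq A] (hc : IsShortestCycle E g s) :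
    ((Finset.range s).image g).card = s := by
  rw [Finset.card_image_of_injOn (by simpa using hc.injOn), Finset.card_range]

theorem mem_image_range [DecidableEq A] (hc : IsShortestCycle E g s) (i : ℕ) :
    g i ∈ (Finset.range s).image g :=
  Finset.mem_image.2 ⟨i % s, Finset.mem_range.2 (Nat.mod_lt i hc.pos), hc.periodic.map_mod_nat i⟩

theorem exists_relPow_card_sub [Fintype A] (hc : IsShortestCycle E g s) {k : ℕ}
    (hE : ∀ a b, RelPow E k a b) (a : A) : ∃ i, RelPow E (Fintype.card A - s) a (g i) := by
  classical
  set C := (Finset.range s).image g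
  set f : Finset A → Finset A := fun T => Finset.univ.filter fun a => ∃ c ∈ T, E a c
  have hiter (t : ℕ) : f^[t] C = Finset.univ.filter fun a => ∃ i, RelPow E t a (g i) := by
    induction t with
    | zero =>
      ext a
      simp only [Function.iterate_zero, id, Finset.mem_filter, Finset.mem_univ, true_and,
        relPow_zero]
      refine ⟨fun ha => ?_, fun ⟨i, hi⟩ => hi ▸ hc.mem_image_range i⟩
      obtain ⟨i, -, rfl⟩ := Finset.mem_image.1 ha
      exact ⟨i, rfl⟩
    | succ t ih =>
      rw [Function.iterate_succ_apply', ih]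
      ext a
      simp only [f, Finset.mem_filter, Finset.mem_univ, true_and, relPow_succ]
      exact ⟨fun ⟨c, ⟨i, hci⟩, hac⟩ => ⟨i, c, hac, hci⟩,
        fun ⟨i, c, hac, hci⟩ => ⟨c, ⟨i, hci⟩, hac⟩⟩
  have hmono : Monotone f := fun T U hTU a => by
    simp only [f, Finset.mem_filter, Finset.mem_univ, true_and]
    exact fun ⟨c, hc, hac⟩ => ⟨c, hTU hc, hac⟩
  have hCf : C ⊆ f C := by
    intro x hx
    obtain ⟨i, -, rfl⟩ := Finset.mem_image.1 hx
    simpa [f] using ⟨g (i + 1), hc.mem_image_range (i + 1), hc.chain i⟩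
  have hk : f^[k] C = Finset.univ := by
    rw [hiter]
    exact Finset.filter_true_of_mem fun a _ => ⟨0, hE a (g 0)⟩
  have := Finset.iterate_card_sub_eq_univ hmono hCf hk ▸ Finset.mem_univ a
  rw [hc.card_image_range, hiter] at this
  simpa using this

theorem relPow_mul_card_sub_one [Fintype A] (hc : IsShortestCycle E g s) {k : ℕ} (hk : 0 < k)
    (hE : ∀ a b, RelPow E k a b) (i : ℕ) (b : A) :
    RelPow E (s * (Fintype.card A - 1)) (g i) b := by
  classical
  set F : Finset A → Finset A := fun T => Finset.univ.filter fun b => ∃ c ∈ T, RelPow E s c b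
  have hiter (j : ℕ) : F^[j] {g i} = Finset.univ.filter (RelPow E (s * j) (g i)) := by
    induction j with
    | zero => ext b; simp [relPow_zero, eq_comm]
    | succ j ih =>
      rw [Function.iterate_succ_apply', ih]
      ext b
      simp only [F, Finset.mem_filter, Finset.mem_univ, true_and, Nat.mul_succ, relPow_add]
  have hmono : Monotone F := fun T U hTU b => by
    simp only [F, Finset.mem_filter, Finset.mem_univ, true_and]
    exact fun ⟨c, hc, hcb⟩ => ⟨c, hTU hc, hcb⟩
  have hloop : {g i} ⊆ F {g i} := by
    simpa [F] using hc.periodic i ▸ hc.relPow i s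
  have hk : F^[k] {g i} = Finset.univ := by
    rw [hiter]
    exact Finset.filter_true_of_mem fun b _ =>
      relPow_of_le hk (Nat.le_mul_of_pos_left k hc.pos) hE _ b
  have := Finset.iterate_card_sub_eq_univ hmono hloop hk ▸ Finset.mem_univ b
  rw [Finset.card_singleton, hiter] at this
  simpa using this

/-- A shortest cycle through all `n` vertices would leave every vertex a single successor, and
then no power of `E` could relate a vertex to two distinct ones. -/
theorem lt_card [Fintype A] (hc : IsShortestCycle E g s) (h2 : 2 ≤ Fintype.card A) {k : ℕ}
    (hE : ∀ a b, RelPow E k a b) : s < Fintype.card A := by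
  classical
  have hle : s ≤ Fintype.card A := hc.card_image_range ▸ Finset.card_le_univ _
  by_contra hge
  have hsurj : ∀ x, ∃ i < s, g i = x := fun x => by
    have himg := Finset.eq_univ_of_card _ (hc.card_image_range.trans (by omega))
    have hx : x ∈ (Finset.range s).image g := by rw [himg]; exact Finset.mem_univ x
    simpa using hx
  have hsucc : ∀ i < s, ∀ y, E (g i) y → y = g (i + 1) := by
    intro i hi y hy
    obtain ⟨j, hj, rfl⟩ := hsurj y
    rcases le_or_gt j i with hji | hij
    · have hloop : RelPow E (i - j + 1) (g i) (g i) :=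
        ⟨g j, hy, by simpa [Nat.add_sub_cancel' hji] using hc.relPow j (i - j)⟩
      have := hc.minimal _ _ (by omega) hloop
      rw [show j = 0 by omega, show i + 1 = s by omega, hc.periodic.eq]
    · have hback := hc.relPow j (i + s - j)
      rw [show j + (i + s - j) = i + s by omega, hc.periodic i] at hback
      have := hc.minimal (i + s - j + 1) _ (by omega) ⟨g j, hy, hback⟩
      rw [show j = i + 1 by omega]
  have hfun : ∀ a b b', E a b → E a b' → b = b' := by
    intro a b b' hb hb'
    obtain ⟨i, hi, rfl⟩ := hsurj a
    exact (hsucc i hi b hb).trans (hsucc i hi b' hb').symm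
  obtain ⟨x, y, hxy⟩ := Fintype.exists_pair_of_one_lt_card h2
  exact hxy (RelPow.eq_of_functional hfun (hE x x) (hE x y))

end IsShortestCycle

theorem relPow_wielandt [Fintype A] (h2 : 2 ≤ Fintype.card A) (hE : ∃ k, ∀ a b, RelPow E k a b)
    {m : ℕ} (hm : Fintype.card A ^ 2 - 2 * Fintype.card A + 2 ≤ m) (a b : A) :
    RelPow E m a b := by
  obtain ⟨k, hk⟩ := hE
  obtain ⟨x, y, hxy⟩ := Fintype.exists_pair_of_one_lt_card h2
  have : Nonempty A := ⟨x⟩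
  have hk0 : 0 < k := Nat.pos_of_ne_zero fun h => hxy (by subst h; exact hk x y)
  obtain ⟨g, s, hc⟩ := exists_isShortestCycle hk0 hk
  have hs := hc.lt_card h2 hk
  have hL (u v : A) : RelPow E (Fintype.card A - s + s * (Fintype.card A - 1)) u v := by
    obtain ⟨i, hi⟩ := hc.exists_relPow_card_sub hk u
    exact relPow_add.2 ⟨g i, hi, hc.relPow_mul_card_sub_one hk0 hk i v⟩
  refine relPow_of_le (by omega) (le_trans ?_ hm) hL a b
  obtain ⟨n, hn⟩ : ∃ n, Fintype.card A = n + 2 := ⟨_, (Nat.sub_add_cancel h2).symm⟩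
  obtain ⟨t, rfl⟩ : ∃ t, s = t + 1 := ⟨_, (Nat.sub_add_cancel hc.pos).symm⟩
  have : t * n ≤ n * n := Nat.mul_le_mul_right _ (by omega)
  have hsq : (n + 2) ^ 2 = n * n + 4 * n + 4 := by ring
  have hprod : (t + 1) * (n + 2 - 1) = t * n + t + n + 1 := by
    rw [show n + 2 - 1 = n + 1 by omega]; ring
  rw [hn, hsq, hprod]
  omega

end ShortestCycle

section Substitution

variable {A : Type*} (σ : A → List A)

theorem substPow_succ (t : ℕ) (w : List A) :
    substPow σ (t + 1) w = substPow σ t (substWord σ w) :=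
  Function.iterate_succ_apply _ t w

theorem substPow_eq_flatMap (t : ℕ) (w : List A) :
    substPow σ t w = w.flatMap fun c => substPow σ t [c] := by
  induction t generalizing w with
  | zero => simp [substPow]
  | succ t ih =>
    rw [substPow_succ, ih, substWord, List.flatMap_assoc]
    congr 1
    funext c
    rw [substPow_succ, substWord, List.flatMap_singleton, ih]

theorem mem_substPow_singleton_iff {t : ℕ} {a b : A} :
    b ∈ substPow σ t [a] ↔ RelPow (fun a b => b ∈ σ a) t a b := by
  induction t generalizing a with
  | zero => simp [substPow, relPow_zero, eq_comm]
  | succ t ih =>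
    rw [substPow_succ, substWord, List.flatMap_singleton, substPow_eq_flatMap, List.mem_flatMap,
      relPow_succ]
    simp only [ih]

variable [Fintype A] [DecidableEq A]

theorem List.length_eq_sum_count (l : List A) : l.length = ∑ c, l.count c := by
  simpa using (Multiset.sum_count_eq_card (s := .univ) (m := (l : Multiset A)) (by simp)).symm

theorem List.count_flatMap_eq_sum (l : List A) (f : A → List A) (c : A) :
    (l.flatMap f).count c = ∑ b, l.count b * (f b).count c := by
  rw [List.count_flatMap, Finset.sum_list_map_count]
  refine Finset.sum_subset (Finset.subset_univ _) fun b _ hb => ?_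
  simp [List.count_eq_zero_of_not_mem (mt List.mem_toFinset.2 hb)]

theorem incMatrixR_pow_apply (m : ℕ) (a c : A) :
    (incMatrixR σ ^ m) a c = (substPow σ m [a]).count c := by
  induction m generalizing a with
  | zero => by_cases h : a = c <;> simp [substPow, h]
  | succ m ih =>
    rw [pow_succ', Matrix.mul_apply, substPow_succ, substWord, List.flatMap_singleton,
      substPow_eq_flatMap, List.count_flatMap_eq_sum, Nat.cast_sum]
    simp only [Nat.cast_mul, ih]
    rfl

theorem vecMul_single_incMatrixR_pow (m : ℕ) (a : A) :
    Matrix.vecMul (Pi.single a 1) (incMatrixR σ ^ m) =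
      fun c => ((substPow σ m [a]).count c : ℝ) := by
  ext c
  rw [Matrix.single_one_vecMul]
  exact incMatrixR_pow_apply σ m a c

end Substitution

section ProjMetric

variable {A : Type*} [Fintype A] [Nonempty A]

noncomputable def ratioSup (x y : A → ℝ) : ℝ :=
  Finset.univ.sup' Finset.univ_nonempty fun a => x a / y a

noncomputable def ratioInf (x y : A → ℝ) : ℝ :=
  Finset.univ.inf' Finset.univ_nonempty fun a => x a / y a

variable {x y : A → ℝ}

theorem projMetric_eq_log : projMetric x y = Real.log (ratioSup x y / ratioInf x y) := rfl

theorem le_ratioSup_mul (hy : ∀ a, 0 < y a) (a : A) : x a ≤ ratioSup x y * y a :=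
  (div_le_iff₀ (hy a)).1 (Finset.le_sup' (fun a => x a / y a) (Finset.mem_univ a))

theorem ratioInf_mul_le (hy : ∀ a, 0 < y a) (a : A) : ratioInf x y * y a ≤ x a :=
  (le_div_iff₀ (hy a)).1 (Finset.inf'_le (fun a => x a / y a) (Finset.mem_univ a))

theorem ratioInf_pos (hx : ∀ a, 0 < x a) (hy : ∀ a, 0 < y a) : 0 < ratioInf x y :=
  (Finset.lt_inf'_iff _).2 fun a _ => div_pos (hx a) (hy a)

theorem ratioInf_le_ratioSup : ratioInf x y ≤ ratioSup x y :=
  let a := Classical.arbitrary A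
  (Finset.inf'_le (fun a => x a / y a) (Finset.mem_univ a)).trans
    (Finset.le_sup' (fun a => x a / y a) (Finset.mem_univ a))

theorem projMetric_nonneg (hx : ∀ a, 0 < x a) (hy : ∀ a, 0 < y a) : 0 ≤ projMetric x y :=
  Real.log_nonneg ((one_le_div (ratioInf_pos hx hy)).2 ratioInf_le_ratioSup)

theorem exp_projMetric (hx : ∀ a, 0 < x a) (hy : ∀ a, 0 < y a) :
    Real.exp (projMetric x y) = ratioSup x y / ratioInf x y :=
  Real.exp_log (div_pos ((ratioInf_pos hx hy).trans_le ratioInf_le_ratioSup) (ratioInf_pos hx hy))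

theorem projMetric_le_log_of_bounds (hy : ∀ a, 0 < y a) {l u : ℝ} (hl : 0 < l)
    (hlx : ∀ a, l * y a ≤ x a) (hxu : ∀ a, x a ≤ u * y a) :
    projMetric x y ≤ Real.log (u / l) := by
  have hinf : l ≤ ratioInf x y :=
    Finset.le_inf' _ _ fun a _ => (le_div_iff₀ (hy a)).2 (hlx a)
  have hsup : ratioSup x y ≤ u :=
    Finset.sup'_le _ _ fun a _ => (div_le_iff₀ (hy a)).2 (hxu a)
  have hinf_pos := hl.trans_le hinf
  exact Real.log_le_log (div_pos (hinf_pos.trans_le ratioInf_le_ratioSup) hinf_pos)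
    (div_le_div₀ (hl.le.trans (hinf.trans (ratioInf_le_ratioSup.trans hsup))) hsup hl hinf)

theorem projMetric_self (hx : ∀ a, 0 < x a) : projMetric x x = 0 := by
  simp [projMetric, div_self (hx _).ne']

theorem projMetric_le_projMetric_smul (hx : ∀ a, 0 < x a) (hy : ∀ a, 0 < y a) {c : ℝ} (hc : 0 < c) :
    projMetric x y ≤ projMetric x (c • y) := by
  have hcy : ∀ a, 0 < (c • y) a := fun a => mul_pos hc (hy a)
  refine (projMetric_le_log_of_bounds (u := ratioSup x (c • y) * c) hy
    (mul_pos (ratioInf_pos hx hcy) hc)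
    (fun a => ?_) (fun a => ?_)).trans_eq ?_
  · simpa [mul_assoc] using ratioInf_mul_le hcy a
  · simpa [mul_assoc] using le_ratioSup_mul (x := x) hcy a
  · rw [projMetric_eq_log, mul_div_mul_right _ _ hc.ne']

theorem projMetric_smul_right (hx : ∀ a, 0 < x a) (hy : ∀ a, 0 < y a) {c : ℝ} (hc : 0 < c) :
    projMetric x (c • y) = projMetric x y := by
  refine le_antisymm ?_ (projMetric_le_projMetric_smul hx hy hc)
  have := projMetric_le_projMetric_smul hx (y := c • y) (fun a => mul_pos hc (hy a)) (inv_pos.2 hc)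
  rwa [smul_smul, inv_mul_cancel₀ hc.ne', one_smul] at this

end ProjMetric

section Contraction

open Matrix

variable {A : Type*} [Fintype A] {P : Matrix A A ℝ} {x y α : A → ℝ}

theorem vecMul_pos (hP : ∀ a b, 0 < P a b) {v : A → ℝ} (hv : 0 ≤ v) {d : A} (hd : 0 < v d)
    (c : A) : 0 < vecMul v P c :=
  Finset.sum_pos' (fun b _ => mul_nonneg (hv b) (hP b c).le)
    ⟨d, Finset.mem_univ d, mul_pos hd (hP d c)⟩

theorem vecMul_le_vecMul (hP : ∀ a b, 0 ≤ P a b) (hxy : ∀ a, x a ≤ y a) (c : A) :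
    vecMul x P c ≤ vecMul y P c :=
  Finset.sum_le_sum fun b _ => mul_le_mul_of_nonneg_right (hxy b) (hP b c)

theorem vecMul_pow_eq_smul [DecidableEq A] {M : Matrix A A ℝ} {lam : ℝ} (h : vecMul α M = lam • α)
    (n : ℕ) : vecMul α (M ^ n) = lam ^ n • α := by
  induction n with
  | zero => simp
  | succ n ih => rw [pow_succ, ← vecMul_vecMul, ih, smul_vecMul, h, smul_smul, ← pow_succ]

variable [Nonempty A]

theorem vecMul_pos_of_pos (hP : ∀ a b, 0 < P a b) (hx : ∀ a, 0 < x a) (c : A) :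
    0 < vecMul x P c :=
  vecMul_pos hP (fun a => (hx a).le) (hx (Classical.arbitrary A)) c

theorem projMetric_vecMul_le (hP : ∀ a b, 0 < P a b) (hx : ∀ a, 0 < x a) (hy : ∀ a, 0 < y a) :
    projMetric (vecMul x P) (vecMul y P) ≤ projMetric x y := by
  have hP' : ∀ a b, 0 ≤ P a b := fun a b => (hP a b).le
  refine projMetric_le_log_of_bounds (vecMul_pos_of_pos hP hy) (ratioInf_pos hx hy)
    (fun c => ?_) (fun c => ?_)
  · rw [← smul_eq_mul, ← Pi.smul_apply, ← smul_vecMul]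
    exact vecMul_le_vecMul hP' (ratioInf_mul_le hy) c
  · rw [← smul_eq_mul, ← Pi.smul_apply, ← smul_vecMul]
    exact vecMul_le_vecMul hP' (le_ratioSup_mul hy) c

theorem le_birkhoff (hP : ∀ a b, 0 < P a b) (hx : ∀ a, 0 < x a) (hy : ∀ a, 0 < y a)
    (hxy : LinearIndependent ℝ ![x, y]) :
    projMetric (vecMul x P) (vecMul y P) / projMetric x y ≤ birkhoff P := by
  refine le_csSup ⟨1, ?_⟩ ⟨x, y, hx, hy, hxy, rfl⟩
  rintro r ⟨x, y, hx, hy, -, rfl⟩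
  exact div_le_one_of_le₀ (projMetric_vecMul_le hP hx hy) (projMetric_nonneg hx hy)

theorem birkhoff_nonneg (hP : ∀ a b, 0 < P a b) : 0 ≤ birkhoff P := by
  refine Real.sSup_nonneg ?_
  rintro r ⟨x, y, hx, hy, -, rfl⟩
  exact div_nonneg (projMetric_nonneg (vecMul_pos_of_pos hP hx) (vecMul_pos_of_pos hP hy))
    (projMetric_nonneg hx hy)

theorem projMetric_vecMul_le_birkhoff_mul (hP : ∀ a b, 0 < P a b) (hx : ∀ a, 0 < x a)
    (hy : ∀ a, 0 < y a) :
    projMetric (vecMul x P) (vecMul y P) ≤ birkhoff P * projMetric x y := by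
  rcases (projMetric_nonneg hx hy).eq_or_lt with h0 | hpos
  · rw [← h0, mul_zero]
    exact (projMetric_vecMul_le hP hx hy).trans h0.ge
  have hxy : LinearIndependent ℝ ![x, y] := by
    have a := Classical.arbitrary A
    refine (LinearIndependent.pair_iff' fun h => (hx a).ne' (congrFun h a)).2 fun c hc => ?_
    have hc0 : 0 < c := pos_of_mul_pos_left (by simpa [← hc] using hy a) (hx a).le
    rw [← hc, projMetric_smul_right hx hx hc0, projMetric_self hx] at hpos
    exact hpos.false
  exact (div_le_iff₀ hpos).1 (le_birkhoff hP hx hy hxy)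

theorem projMetric_vecMul_le_birkhoff_mul_of_eigen (hP : ∀ a b, 0 < P a b) (hα : ∀ a, 0 < α a)
    {μ : ℝ} (hαP : vecMul α P = μ • α) (hx : ∀ a, 0 < x a) :
    projMetric (vecMul x P) α ≤ birkhoff P * projMetric x α := by
  have a := Classical.arbitrary A
  have hμ : 0 < μ := by
    have := vecMul_pos_of_pos hP hα a
    rw [hαP] at this
    exact pos_of_mul_pos_left this (hα a).le
  rw [← projMetric_smul_right (vecMul_pos_of_pos hP hx) hα hμ, ← hαP]
  exact projMetric_vecMul_le_birkhoff_mul hP hx hα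

theorem projMetric_vecMul_pow_le [DecidableEq A] (hP : ∀ a b, 0 < P a b) (hα : ∀ a, 0 < α a)
    {μ : ℝ} (hαP : vecMul α P = μ • α) (hx : ∀ a, 0 < x a) (j : ℕ) :
    projMetric (vecMul x (P ^ j)) α ≤ birkhoff P ^ j * projMetric x α := by
  induction j generalizing x with
  | zero => simp
  | succ j ih =>
    rw [pow_succ', ← vecMul_vecMul]
    calc projMetric (vecMul (vecMul x P) (P ^ j)) α
        ≤ birkhoff P ^ j * projMetric (vecMul x P) α := ih (vecMul_pos_of_pos hP hx)
      _ ≤ birkhoff P ^ j * (birkhoff P * projMetric x α) :=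
          mul_le_mul_of_nonneg_left (projMetric_vecMul_le_birkhoff_mul_of_eigen hP hα hαP hx)
            (pow_nonneg (birkhoff_nonneg hP) j)
      _ = birkhoff P ^ (j + 1) * projMetric x α := by ring

theorem projMetric_vecMul_le_sup' [DecidableEq A] (hP : ∀ a b, 0 < P a b) (hα : ∀ a, 0 < α a)
    {v : A → ℝ} (hv : 0 ≤ v) {d₀ : A} (hd₀ : 0 < v d₀) :
    projMetric (vecMul v P) α ≤
      Finset.univ.sup' Finset.univ_nonempty fun d => projMetric (vecMul (Pi.single d 1) P) α := by
  set S := fun d => ratioSup (P d) α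
  set I := fun d => ratioInf (P d) α
  have hI (d : A) : 0 < I d := ratioInf_pos (hP d) hα
  obtain ⟨dm, -, hdm⟩ :=
    Finset.exists_max_image Finset.univ (fun d => S d / I d) Finset.univ_nonempty
  have hl : 0 < ∑ d, v d * I d :=
    Finset.sum_pos' (fun d _ => mul_nonneg (hv d) (hI d).le)
      ⟨d₀, Finset.mem_univ d₀, mul_pos hd₀ (hI d₀)⟩
  have hlu : ∑ d, v d * I d ≤ ∑ d, v d * S d :=
    Finset.sum_le_sum fun d _ => mul_le_mul_of_nonneg_left ratioInf_le_ratioSup (hv d)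
  have hlow (c : A) : (∑ d, v d * I d) * α c ≤ vecMul v P c := by
    rw [Finset.sum_mul]
    exact Finset.sum_le_sum fun d _ =>
      (mul_assoc (v d) _ _).trans_le (mul_le_mul_of_nonneg_left (ratioInf_mul_le hα c) (hv d))
  have hup (c : A) : vecMul v P c ≤ (∑ d, v d * S d) * α c := by
    rw [Finset.sum_mul]
    exact Finset.sum_le_sum fun d _ =>
      (mul_le_mul_of_nonneg_left (le_ratioSup_mul hα c) (hv d)).trans_eq (mul_assoc (v d) _ _).symm
  have hSI : ∑ d, v d * S d ≤ S dm / I dm * ∑ d, v d * I d := by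
    rw [Finset.mul_sum]
    refine Finset.sum_le_sum fun d _ => ?_
    rw [mul_left_comm]
    exact mul_le_mul_of_nonneg_left ((div_le_iff₀ (hI d)).1 (hdm d (Finset.mem_univ d))) (hv d)
  calc projMetric (vecMul v P) α ≤ Real.log ((∑ d, v d * S d) / ∑ d, v d * I d) :=
        projMetric_le_log_of_bounds hα hl hlow hup
    _ ≤ Real.log (S dm / I dm) :=
        Real.log_le_log (div_pos (hl.trans_le hlu) hl) ((div_le_iff₀ hl).2 hSI)
    _ = projMetric (vecMul (Pi.single dm 1) P) α := by rw [single_one_vecMul]; rfl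
    _ ≤ _ := Finset.le_sup' (fun d => projMetric (vecMul (Pi.single d 1) P) α) (Finset.mem_univ dm)

theorem projMetric_vecMul_pow_succ_le [DecidableEq A] (hP : ∀ a b, 0 < P a b)
    (hα : ∀ a, 0 < α a) {μ : ℝ} (hαP : vecMul α P = μ • α) {v : A → ℝ} (hv : 0 ≤ v) {d₀ : A}
    (hd₀ : 0 < v d₀) (j : ℕ) :
    projMetric (vecMul v (P ^ (j + 1))) α ≤ birkhoff P ^ j *
      Finset.univ.sup' Finset.univ_nonempty fun d => projMetric (vecMul (Pi.single d 1) P) α := by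
  rw [pow_succ', ← vecMul_vecMul]
  exact (projMetric_vecMul_pow_le hP hα hαP (vecMul_pos hP hv hd₀) j).trans
    (mul_le_mul_of_nonneg_left (projMetric_vecMul_le_sup' hP hα hv hd₀)
      (pow_nonneg (birkhoff_nonneg hP) j))

end Contraction

section Frequencies

variable {A : Type*} [Fintype A] [Nonempty A] {x y α : A → ℝ}

theorem abs_div_sum_sub_div_sum_le (hx : ∀ a, 0 < x a) (hα : ∀ a, 0 < α a) (c : A) :
    |x c / ∑ a, x a - α c / ∑ a, α a| ≤ Real.exp (projMetric x α) - 1 := by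
  set S := ratioSup x α
  set I := ratioInf x α
  have hI : 0 < I := ratioInf_pos hx hα
  have hS : 0 < S := hI.trans_le ratioInf_le_ratioSup
  have hIS : I ≤ S := ratioInf_le_ratioSup
  have hsumα : 0 < ∑ a, α a := Finset.sum_pos (fun a _ => hα a) Finset.univ_nonempty
  have hsumx : 0 < ∑ a, x a := Finset.sum_pos (fun a _ => hx a) Finset.univ_nonempty
  set β := α c / ∑ a, α a
  have hβ : 0 < β := div_pos (hα c) hsumα
  have hβ1 : β ≤ 1 :=
    (div_le_one hsumα).2 (Finset.single_le_sum (fun a _ => (hα a).le) (Finset.mem_univ c))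
  have hup : x c / ∑ a, x a ≤ S / I * β := by
    rw [div_mul_div_comm]
    refine div_le_div₀ (mul_nonneg hS.le (hα c).le) (le_ratioSup_mul hα c) (mul_pos hI hsumα) ?_
    rw [Finset.mul_sum]
    exact Finset.sum_le_sum fun a _ => ratioInf_mul_le hα a
  have hlow : I / S * β ≤ x c / ∑ a, x a := by
    rw [div_mul_div_comm]
    refine div_le_div₀ (hx c).le (ratioInf_mul_le hα c) hsumx ?_
    rw [Finset.mul_sum]
    exact Finset.sum_le_sum fun a _ => le_ratioSup_mul hα a
  have hr : S / I * (I / S) = 1 := by field_simp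
  have hr1 : 1 ≤ S / I := (one_le_div hI).2 hIS
  rw [exp_projMetric hx hα, abs_sub_le_iff]
  constructor <;> nlinarith [div_pos hI hS]

theorem abs_div_sum_sub_div_sum_le_of_projMetric_le (hx : ∀ a, 0 < x a) (hy : ∀ a, 0 < y a)
    (hα : ∀ a, 0 < α a) {B : ℝ} (hxB : projMetric x α ≤ B) (hyB : projMetric y α ≤ B) (c : A) :
    |x c / ∑ a, x a - y c / ∑ a, y a| ≤ 2 * Real.exp B - 2 := by
  have hxc := abs_div_sum_sub_div_sum_le hx hα c
  have hyc := abs_div_sum_sub_div_sum_le hy hα c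
  rw [abs_sub_comm] at hyc
  linarith [abs_sub_le (x c / ∑ a, x a) (α c / ∑ a, α a) (y c / ∑ a, y a),
    Real.exp_le_exp.2 hxB, Real.exp_le_exp.2 hyB]

end Frequencies

section PrimitiveSubst

variable {A : Type*} [Fintype A] {σ : A → List A}

theorem IsPrimitiveSubst.mem_substPow (hprim : IsPrimitiveSubst σ) (h2 : 2 ≤ Fintype.card A)
    {m : ℕ} (hm : Fintype.card A ^ 2 - 2 * Fintype.card A + 2 ≤ m) (a b : A) :
    b ∈ substPow σ m [a] := by
  rw [mem_substPow_singleton_iff]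
  exact relPow_wielandt h2 (hprim.imp fun _ hk a b => (mem_substPow_singleton_iff σ).1 (hk b a))
    hm a b

variable [DecidableEq A] [Nonempty A] {n₀ : ℕ}

theorem projMetric_count_substPow_le (hn₀ : 0 < n₀)
    (hreach : ∀ m, n₀ ≤ m → ∀ a b, b ∈ substPow σ m [a]) {lam : ℝ} {α : A → ℝ}
    (hα : ∀ a, 0 < α a) (heig : Matrix.vecMul α (incMatrixR σ) = lam • α) {n : ℕ}
    (hn : n₀ ≤ n) (a : A) :
    projMetric (fun c => ((substPow σ n [a]).count c : ℝ)) α ≤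
      birkhoff (incMatrixR σ ^ n₀) ^ (n / n₀ - 1) * Finset.univ.sup' Finset.univ_nonempty
        fun d => projMetric (Matrix.vecMul (Pi.single d 1) (incMatrixR σ ^ n₀)) α := by
  have hP (b c : A) : 0 < (incMatrixR σ ^ n₀) b c := by
    rw [incMatrixR_pow_apply]
    exact_mod_cast List.count_pos_iff.2 (hreach n₀ le_rfl b c)
  have hsplit : incMatrixR σ ^ n =
      incMatrixR σ ^ (n % n₀) * (incMatrixR σ ^ n₀) ^ (n / n₀ - 1 + 1) := by
    have hq : 1 ≤ n / n₀ := (Nat.le_div_iff_mul_le hn₀).2 (by omega)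
    rw [← pow_mul, ← pow_add, Nat.sub_add_cancel hq, Nat.mod_add_div]
  obtain ⟨d, hd⟩ : ∃ d, d ∈ substPow σ (n % n₀) [a] := by
    have := hreach (n % n₀ + n₀) le_add_self a a
    rw [mem_substPow_singleton_iff, relPow_add] at this
    obtain ⟨d, hd, -⟩ := this
    exact ⟨d, (mem_substPow_singleton_iff σ).2 hd⟩
  rw [← vecMul_single_incMatrixR_pow, hsplit, ← Matrix.vecMul_vecMul, vecMul_single_incMatrixR_pow]
  exact projMetric_vecMul_pow_succ_le hP hα (vecMul_pow_eq_smul heig n₀)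
    (fun _ => by positivity) (by exact_mod_cast List.count_pos_iff.2 hd) _

end PrimitiveSubst

theorem stmt_12_general (A : Type*) [Fintype A] [DecidableEq A] [Nonempty A]
    (h2 : 2 ≤ Fintype.card A)
    (σ : A → List A)
    (hprim : IsPrimitiveSubst σ)
    (lam : ℝ) (α : A → ℝ) (hα : ∀ a, 0 < α a)
    (heig : Matrix.vecMul α (incMatrixR σ) = lam • α)
    (n₀ : ℕ) (hn₀ : n₀ = Fintype.card A ^ 2 - 2 * Fintype.card A + 2) :
    ∀ n : ℕ, 2 * n₀ ≤ n → ∀ a b c : A,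
      |((substPow σ n [a]).count c : ℝ) / ((substPow σ n [a]).length : ℝ)
        - ((substPow σ n [b]).count c : ℝ) / ((substPow σ n [b]).length : ℝ)| ≤
      2 * Real.exp (Finset.univ.sup' Finset.univ_nonempty fun d =>
          projMetric (Matrix.vecMul (Pi.single d 1) ((incMatrixR σ) ^ n₀)) α) ^
        (birkhoff ((incMatrixR σ) ^ n₀) ^ (n / n₀ - 1)) - 2 := by
  intro n hn a b c
  have hreach (m : ℕ) (hm : n₀ ≤ m) (x y : A) : y ∈ substPow σ m [x] :=
    hprim.mem_substPow h2 (hn₀ ▸ hm) x y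
  have hpos (x d : A) : (0 : ℝ) < (substPow σ n [x]).count d := by
    exact_mod_cast List.count_pos_iff.2 (hreach n (by omega) x d)
  have hn₀pos : 0 < n₀ := by omega
  have hn' : n₀ ≤ n := by omega
  rw [← Real.exp_mul, mul_comm _ (birkhoff _ ^ _), List.length_eq_sum_count,
    List.length_eq_sum_count]
  push_cast
  exact abs_div_sum_sub_div_sum_le_of_projMetric_le (hpos a) (hpos b) hα
    (projMetric_count_substPow_le hn₀pos hreach hα heig hn' a)
    (projMetric_count_substPow_le hn₀pos hreach hα heig hn' b) c

/-- Inequality (4.5): for `n ≥ 2n₀` and all letters `a, b, c`,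
`| |σⁿ(a)|_c/|σⁿ(a)| − |σⁿ(b)|_c/|σⁿ(b)| | ≤ 2 exp(max_b d(e_b M^{n₀}, α))^{τ_B(M^{n₀})^{⌊n/n₀⌋−1}} − 2`. -/
theorem stmt_12 (A : Type*) [Fintype A] [DecidableEq A] [Nonempty A]
    (h2 : 2 ≤ Fintype.card A)
    (σ : A → List A) (hσne : ∀ a, σ a ≠ [])
    (hprim : IsPrimitiveSubst σ)
    (lam : ℝ) (α : A → ℝ) (hα : ∀ a, 0 < α a)
    (heig : Matrix.vecMul α (incMatrixR σ) = lam • α)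
    (n₀ : ℕ) (hn₀ : n₀ = Fintype.card A ^ 2 - 2 * Fintype.card A + 2) :
    ∀ n : ℕ, 2 * n₀ ≤ n → ∀ a b c : A,
      |((substPow σ n [a]).count c : ℝ) / ((substPow σ n [a]).length : ℝ)
        - ((substPow σ n [b]).count c : ℝ) / ((substPow σ n [b]).length : ℝ)| ≤
      2 * Real.exp (Finset.univ.sup' Finset.univ_nonempty fun d =>
          projMetric (Matrix.vecMul (Pi.single d 1) ((incMatrixR σ) ^ n₀)) α) ^
        (birkhoff ((incMatrixR σ) ^ n₀) ^ (n / n₀ - 1)) - 2 :=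
  stmt_12_general A h2 σ hprim lam α hα heig n₀ hn₀
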